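/- Let G be a multigraph with maximum degree Δ ≤ k, let z be a vertex, e an uncoloured edge at z, and φ a proper partial k-edge-colouring of G leaving e uncoloured. If e cannot be properly coloured after any sequence of colour shifts along a maximal multi-fan at z, then every maximal multi-fan F = (f₁, x₁, …, f_p, x_p) at z with respect to e and φ satisfies the Vizing fan inequality: the sum over vertices x of F of (number of colours missing at x) is at most the number of edges of F counted appropriately, forcing p ≥ 2. -/

import Mathlib

/-!
Every colour missing at a vertex `x` of a maximal fan is either missing at `z` too, or, by
maximality, the colour of a fan edge `fᵢ` with `i ≥ 2`. A colour `γ` missing at `z` and at `xᵢ`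
is impossible: give `fᵢ` the colour `γ`; its old colour is then missing at `z` and at the earlier
vertex it was taken from, and recursing down the fan we finally colour `e`. Missing sets at
distinct vertices `xᵢ ≠ xⱼ` are disjoint: if both miss `γ` and `z` misses `β`, the
`(γ, β)`-Kempe chain through `z` is a path, so it misses one of them, say `xᵢ`; swapping the chain
at `xᵢ` makes `β` missing at `z` and at `xᵢ` (or at an earlier fan vertex), and we shift along
the part of the fan that survives the swap. Hence the missing colours inject into the colours of
`f₂, …, f_p`, and `x₁` misses a colour because `e` is uncoloured.
-/

open Finset

/-- A multigraph on vertex type `V` with edge type `E`: each edge has an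
unordered pair of distinct endpoints (loopless). -/
structure Multigraph (V : Type) (E : Type) where
  ends : E → Sym2 V
  loopless : ∀ e, ¬ (ends e).IsDiag

namespace Multigraph

variable {V E : Type} [Fintype V] [Fintype E] [DecidableEq V] [DecidableEq E]

/-- The degree of a vertex: the number of edges incident to it. -/
noncomputable def degree (G : Multigraph V E) (v : V) : ℕ :=
  {e : E | v ∈ G.ends e}.ncard

/-- The multiplicity of an unordered pair of vertices. -/
noncomputable def multiplicity (G : Multigraph V E) (s : Sym2 V) : ℕ :=
  {e : E | G.ends e = s}.ncard

/-- Two distinct edges are adjacent when they share an endpoint. -/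
def EdgeAdj (G : Multigraph V E) (e f : E) : Prop :=
  e ≠ f ∧ ∃ v, v ∈ G.ends e ∧ v ∈ G.ends f

/-- A matching: a set of pairwise non-adjacent edges. -/
def IsMatching (G : Multigraph V E) (M : Finset E) : Prop :=
  ∀ e ∈ M, ∀ f ∈ M, e ≠ f → ¬ G.EdgeAdj e f

/-- A maximal matching. -/
def IsMaximalMatching (G : Multigraph V E) (M : Finset E) : Prop :=
  G.IsMatching M ∧ ∀ f ∉ M, ∃ e ∈ M, G.EdgeAdj e f

/-- `c` is a proper edge-colouring of `G` minus the edge set `D`, using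
colours from `{1, …, k}`. -/
def IsProperOff (G : Multigraph V E) (D : Finset E) (k : ℕ) (c : E → ℕ) : Prop :=
  (∀ e, e ∉ D → c e ∈ Finset.Icc 1 k) ∧
    ∀ e f, e ∉ D → f ∉ D → G.EdgeAdj e f → c e ≠ c f

/-- The underlying simple graph of a multigraph. -/
def toSimple (G : Multigraph V E) : SimpleGraph V where
  Adj u v := u ≠ v ∧ ∃ e, G.ends e = s(u, v)
  symm := ⟨by
    rintro u v ⟨h, e, he⟩
    exact ⟨h.symm, e, he.trans Sym2.eq_swap⟩⟩
  loopless := ⟨fun v h => h.1 rfl⟩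

/-- The distance between edges `e` and `f` is at least `d`: every path in the
underlying graph between an endpoint of `e` and an endpoint of `f` has length
at least `d`. -/
def EdgeDistGe (G : Multigraph V E) (e f : E) (d : ℕ) : Prop :=
  ∀ u v, u ∈ G.ends e → v ∈ G.ends f → ∀ p : G.toSimple.Walk u v, d ≤ p.length

/-- The distance between edges `e` and `f` is at most `d`. -/
def EdgeDistLe (G : Multigraph V E) (e f : E) (d : ℕ) : Prop :=
  ∃ u v, u ∈ G.ends e ∧ v ∈ G.ends f ∧ ∃ p : G.toSimple.Walk u v, p.length ≤ d

/-- `G` contains no cycle of length 5. -/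
def C5Free (G : Multigraph V E) : Prop :=
  ¬ ∃ (v : Fin 5 → V) (f : Fin 5 → E), Function.Injective v ∧ Function.Injective f ∧
      ∀ i : Fin 5, G.ends (f i) = s(v i, v (i + 1))

end Multigraph

namespace Multigraph

variable {V E : Type} [Fintype V] [Fintype E] [DecidableEq V] [DecidableEq E]

/-- Colour `c` is missing at the vertex `v`, where `φ` colours the edges
outside `D` from `{1, …, k}`. -/
def MissingAt (G : Multigraph V E) (D : Finset E) (φ : E → ℕ) (k : ℕ) (v : V) (c : ℕ) : Prop :=
  c ∈ Finset.Icc 1 k ∧ ∀ g, g ∉ D → v ∈ G.ends g → φ g ≠ c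

/-- A multi-fan `(f₁, x₁, …, f_p, x_p)` at `z` with respect to the edge
`e = f₁` and the colouring `φ` of the edges outside `D`. -/
structure IsMultiFan (G : Multigraph V E) (D : Finset E) (φ : E → ℕ) (k : ℕ)
    (z : V) (e : E) (p : ℕ) (f : Fin p → E) (x : Fin p → V) : Prop where
  pos : 0 < p
  inj : Function.Injective f
  first : f ⟨0, pos⟩ = e
  ends_eq : ∀ i, G.ends (f i) = s(z, x i)
  coloured : ∀ i : Fin p, i.val ≠ 0 → f i ∉ D
  missing : ∀ i : Fin p, i.val ≠ 0 →
    ∃ j : Fin p, j.val < i.val ∧ G.MissingAt D φ k (x j) (φ (f i))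

/-- A maximal multi-fan: it cannot be extended by any further coloured edge
at `z`. -/
def IsMaximalMultiFan (G : Multigraph V E) (D : Finset E) (φ : E → ℕ) (k : ℕ)
    (z : V) (e : E) (p : ℕ) (f : Fin p → E) (x : Fin p → V) : Prop :=
  G.IsMultiFan D φ k z e p f x ∧
    ∀ g, g ∉ D → g ∉ Set.range f → z ∈ G.ends g →
      ¬ ∃ j : Fin p, G.MissingAt D φ k (x j) (φ g)

/-- A path starting at `u` that alternates between edges `φ`-coloured `i`
and edges of `M' \ M`. -/
def IsAltPath (G : Multigraph V E) (M M' : Finset E) (φ : E → ℕ) (i : ℕ) (u : V)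
    (n : ℕ) (w : Fin (n + 1) → V) (g : Fin n → E) : Prop :=
  w 0 = u ∧ Function.Injective w ∧
    (∀ k : Fin n, G.ends (g k) = s(w k.castSucc, w k.succ)) ∧
    ∀ k : Fin n, if Even k.val then g k ∉ M' ∧ φ (g k) = i else g k ∈ M' \ M

/-- The maximal alternating path starting at `u` contains more than one edge,
i.e. there is an alternating path from `u` with at least two edges. -/
def LongAlt (G : Multigraph V E) (M M' : Finset E) (φ : E → ℕ) (i : ℕ) (u : V) : Prop :=
  ∃ (n : ℕ) (w : Fin (n + 1) → V) (g : Fin n → E),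
    G.IsAltPath M M' φ i u n w g ∧ 2 ≤ n

/-- The set `A_i`: all edges lying on an alternating path starting at an
endpoint of an edge of `M` precoloured `i`. -/
def AltSet (G : Multigraph V E) (M M' : Finset E) (φ Φ : E → ℕ) (i : ℕ) : Set E :=
  {a | ∃ e ∈ M, Φ e = i ∧ ∃ u ∈ G.ends e, ∃ (n : ℕ) (w : Fin (n + 1) → V)
    (g : Fin n → E) (k : Fin n), G.IsAltPath M M' φ i u n w g ∧ g k = a}

/-- An edge `e ∈ M` is bad with respect to `(M', φ)`: there is a path
`e, e₁, e₂` with `φ e₁ = Φ e` and `e₂ ∈ M' \ M`. -/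
def IsBadEdge (G : Multigraph V E) (M M' : Finset E) (Φ φ : E → ℕ) (e : E) : Prop :=
  e ∈ M ∧ ∃ e₁ e₂, G.EdgeAdj e e₁ ∧ G.EdgeAdj e₁ e₂ ∧ e₁ ∉ M' ∧
    φ e₁ = Φ e ∧ e₂ ∈ M' \ M

end Multigraph


namespace SimpleGraph

variable {V : Type*} [Fintype V] [DecidableEq V] {H : SimpleGraph V} [DecidableRel H.Adj]

/-- A connected component spans a tree, so it has at least `|C| - 1` edges, while a vertex of
degree at most one contributes at most one to the degree sum. -/
theorem ConnectedComponent.card_degree_le_one_le_two (hdeg : ∀ v, H.degree v ≤ 2)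
    (C : H.ConnectedComponent) : #{v | v ∈ C.supp ∧ H.degree v ≤ 1} ≤ 2 := by
  have hconn : (H.induce C.supp).Connected := C.connected_toSimpleGraph
  have hdegC (v : C.supp) : (H.induce C.supp).degree v = H.degree v :=
    degree_induce_of_neighborSet_subset fun _ hw => C.mem_supp_of_adj_mem_supp v.2 hw
  have hspan : #{v | v ∈ C.supp} ≤ #(H.induce C.supp).edgeFinset + 1 := by
    have := hconn.card_vert_le_card_edgeSet_add_one
    rwa [Nat.card_eq_fintype_card, Fintype.card_subtype, Nat.card_eq_fintype_card,
      ← edgeFinset_card] at this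
  have hsum : ∑ v ∈ {v | v ∈ C.supp}, H.degree v = 2 * #(H.induce C.supp).edgeFinset := by
    rw [← sum_degrees_eq_twice_card_edges, Finset.sum_congr rfl fun v _ => hdegC v]
    exact Finset.sum_subtype _ (by simp) _
  have hleaf : ∑ v ∈ {v | v ∈ C.supp}, H.degree v + #{v | v ∈ C.supp ∧ H.degree v ≤ 1}
      ≤ 2 * #{v | v ∈ C.supp} := by
    rw [← Finset.filter_filter, Finset.card_filter, ← Finset.sum_add_distrib,
      Finset.card_eq_sum_ones, Finset.mul_sum]
    refine Finset.sum_le_sum fun v _ => ?_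
    have := hdeg v
    split_ifs <;> omega
  omega

end SimpleGraph

namespace Multigraph

variable {V E : Type} {G : Multigraph V E} {D : Finset E} {k : ℕ} {φ : E → ℕ}

def EdgeColorable (G : Multigraph V E) (k : ℕ) : Prop := ∃ c, G.IsProperOff ∅ k c

open Classical in
noncomputable def missingColours (G : Multigraph V E) (D : Finset E) (φ : E → ℕ) (k : ℕ)
    (v : V) : Finset ℕ :=
  {c ∈ Icc 1 k | G.MissingAt D φ k v c}

theorem mem_missingColours {v : V} {c : ℕ} :
    c ∈ G.missingColours D φ k v ↔ G.MissingAt D φ k v c := by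
  simpa [missingColours] using fun h : G.MissingAt D φ k v c => mem_Icc.1 h.1

theorem ncard_setOf_missingAt (v : V) :
    {c | G.MissingAt D φ k v c}.ncard = #(G.missingColours D φ k v) := by
  rw [← Set.ncard_coe_finset]
  congr 1
  ext c
  exact mem_missingColours.symm

theorem IsProperOff.eq_of_mem_ends (hφ : G.IsProperOff D k φ) {g h : E} (hg : g ∉ D)
    (hh : h ∉ D) {v : V} (hvg : v ∈ G.ends g) (hvh : v ∈ G.ends h) (hc : φ g = φ h) :
    g = h := by
  by_contra hne
  exact hφ.2 g h hg hh ⟨hne, v, hvg, hvh⟩ hc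

theorem exists_missingAt_of_mem_ends [Finite E] {Δ : ℕ} (hΔ : ∀ v, G.degree v ≤ Δ)
    (hΔk : Δ ≤ k) {e : E} (he : e ∈ D) {v : V} (hv : v ∈ G.ends e) : ∃ c, G.MissingAt D φ k v c := by
  classical
  have := Fintype.ofFinite E
  set T : Finset E := {g | g ∉ D ∧ v ∈ G.ends g}
  have hT : #T < k := by
    have hdeg : G.degree v = #{g | v ∈ G.ends g} := by
      simp [degree, Set.ncard_eq_toFinset_card']
    have hsub : insert e T ⊆ ({g | v ∈ G.ends g} : Finset E) := by
      intro g hg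
      rcases mem_insert.1 hg with rfl | hg
      · simpa using hv
      · simpa using (mem_filter.1 hg).2.2
    have := card_le_card hsub
    rw [card_insert_of_notMem (by simp [T, he])] at this
    have := hΔ v
    omega
  obtain ⟨c, hc, hcT⟩ := exists_mem_notMem_of_card_lt_card
    (card_image_le.trans_lt (hT.trans_eq (Nat.card_Icc 1 k).symm) : #(T.image φ) < #(Icc 1 k))
  exact ⟨c, hc, fun g hg hvg hgc => hcT (mem_image.2 ⟨g, by simp [T, hg, hvg], hgc⟩)⟩

section Recolouring

variable {g : E} {γ : ℕ}

theorem IsProperOff.update [DecidableEq E] (hφ : G.IsProperOff D k φ) {a b : V}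
    (hg : G.ends g = s(a, b)) (ha : G.MissingAt D φ k a γ) (hb : G.MissingAt D φ k b γ) :
    G.IsProperOff (D.erase g) k (Function.update φ g γ) := by
  have hfresh : ∀ h ∉ D.erase g, h ≠ g → ∀ v ∈ G.ends g, v ∈ G.ends h → φ h ≠ γ := by
    intro h hh hhg v hvg hvh
    rw [hg, Sym2.mem_iff] at hvg
    rcases hvg with rfl | rfl
    · exact ha.2 h (by simpa [hhg] using hh) hvh
    · exact hb.2 h (by simpa [hhg] using hh) hvh
  refine ⟨fun h hh => ?_, fun h₁ h₂ hh₁ hh₂ hadj => ?_⟩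
  · rcases eq_or_ne h g with hhg | hhg
    · simpa [hhg] using ha.1
    · rw [Function.update_of_ne hhg]
      exact hφ.1 h (by simpa [hhg] using hh)
  obtain ⟨hne, v, hv₁, hv₂⟩ := hadj
  rcases eq_or_ne h₁ g with h₁g | h₁g <;> rcases eq_or_ne h₂ g with h₂g | h₂g
  · exact absurd (h₁g.trans h₂g.symm) hne
  · rw [h₁g, Function.update_self, Function.update_of_ne h₂g]
    exact (hfresh h₂ hh₂ h₂g v (h₁g ▸ hv₁) hv₂).symm
  · rw [h₂g, Function.update_self, Function.update_of_ne h₁g]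
    exact hfresh h₁ hh₁ h₁g v (h₂g ▸ hv₂) hv₁
  · rw [Function.update_of_ne h₁g, Function.update_of_ne h₂g]
    exact hφ.2 h₁ h₂ (by simpa [h₁g] using hh₁) (by simpa [h₂g] using hh₂) ⟨hne, v, hv₁, hv₂⟩

theorem MissingAt.update [DecidableEq E] {v : V} {c : ℕ} (hm : G.MissingAt D φ k v c)
    (hγc : γ ≠ c) : G.MissingAt D (Function.update φ g γ) k v c := by
  refine ⟨hm.1, fun h hh hvh => ?_⟩
  rcases eq_or_ne h g with hhg | hhg
  · rwa [hhg, Function.update_self]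
  · rw [Function.update_of_ne hhg]
    exact hm.2 h hh hvh

theorem IsProperOff.missingAt_update [DecidableEq E] (hφ : G.IsProperOff D k φ) (hg : g ∉ D) {v : V}
    (hvg : v ∈ G.ends g) (hγ : γ ≠ φ g) : G.MissingAt D (Function.update φ g γ) k v (φ g) := by
  refine ⟨hφ.1 g hg, fun h hh hvh => ?_⟩
  rcases eq_or_ne h g with hhg | hhg
  · rw [hhg, Function.update_self]
    exact hγ
  · rw [Function.update_of_ne hhg]
    exact hφ.2 h g hh hg ⟨hhg, v, hvh, hvg⟩

end Recolouring

section Kempe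

variable {γ β : ℕ} {R : Set V}

open Classical in
noncomputable def kempeSwap (G : Multigraph V E) (φ : E → ℕ) (γ β : ℕ) (R : Set V) : E → ℕ :=
  fun g => if ∃ v ∈ G.ends g, v ∈ R then Equiv.swap γ β (φ g) else φ g

def IsKempeClosed (G : Multigraph V E) (D : Finset E) (φ : E → ℕ) (γ β : ℕ) (R : Set V) :
    Prop :=
  ∀ g ∉ D, (φ g = γ ∨ φ g = β) → ∀ u ∈ G.ends g, u ∈ R → ∀ w ∈ G.ends g, w ∈ R

def kempeGraph (G : Multigraph V E) (D : Finset E) (φ : E → ℕ) (γ β : ℕ) : SimpleGraph V :=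
  SimpleGraph.fromEdgeSet {s | ∃ g ∉ D, (φ g = γ ∨ φ g = β) ∧ G.ends g = s}

theorem kempeSwap_apply_of_mem {g : E} {v : V} (hvg : v ∈ G.ends g) (hv : v ∈ R) :
    G.kempeSwap φ γ β R g = Equiv.swap γ β (φ g) :=
  if_pos ⟨v, hvg, hv⟩

theorem IsKempeClosed.kempeSwap_apply_of_notMem (hR : G.IsKempeClosed D φ γ β R) {g : E}
    (hg : g ∉ D) {v : V} (hvg : v ∈ G.ends g) (hv : v ∉ R) : G.kempeSwap φ γ β R g = φ g := by
  unfold kempeSwap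
  split_ifs with h
  · obtain ⟨u, hug, hu⟩ := h
    apply Equiv.swap_apply_of_ne_of_ne <;> intro hc
    · exact hv (hR g hg (Or.inl hc) u hug hu v hvg)
    · exact hv (hR g hg (Or.inr hc) u hug hu v hvg)
  · rfl

theorem IsProperOff.kempeSwap (hφ : G.IsProperOff D k φ) (hγ : γ ∈ Icc 1 k) (hβ : β ∈ Icc 1 k)
    (hR : G.IsKempeClosed D φ γ β R) : G.IsProperOff D k (G.kempeSwap φ γ β R) := by
  refine ⟨fun g hg => ?_, fun g h hg hh ⟨hne, v, hvg, hvh⟩ => ?_⟩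
  · unfold Multigraph.kempeSwap
    split_ifs
    · rw [Equiv.swap_apply_def]
      split_ifs
      exacts [hβ, hγ, hφ.1 g hg]
    · exact hφ.1 g hg
  by_cases hv : v ∈ R
  · rw [kempeSwap_apply_of_mem hvg hv, kempeSwap_apply_of_mem hvh hv]
    exact (Equiv.injective _).ne (hφ.2 g h hg hh ⟨hne, v, hvg, hvh⟩)
  · rw [hR.kempeSwap_apply_of_notMem hg hvg hv, hR.kempeSwap_apply_of_notMem hh hvh hv]
    exact hφ.2 g h hg hh ⟨hne, v, hvg, hvh⟩

theorem MissingAt.kempeSwap_of_mem {v : V} {c : ℕ}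
    (hm : G.MissingAt D φ k v (Equiv.swap γ β c)) (hc : c ∈ Icc 1 k) (hv : v ∈ R) :
    G.MissingAt D (G.kempeSwap φ γ β R) k v c := by
  refine ⟨hc, fun g hg hvg => ?_⟩
  rw [kempeSwap_apply_of_mem hvg hv, ne_eq, Equiv.swap_apply_eq_iff]
  exact hm.2 g hg hvg

theorem MissingAt.kempeSwap {v : V} {c : ℕ} (hm : G.MissingAt D φ k v c)
    (hR : G.IsKempeClosed D φ γ β R) (h : (c ≠ γ ∧ c ≠ β) ∨ v ∉ R) :
    G.MissingAt D (G.kempeSwap φ γ β R) k v c := by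
  by_cases hv : v ∈ R
  · refine MissingAt.kempeSwap_of_mem ?_ hm.1 hv
    obtain ⟨hcγ, hcβ⟩ := h.resolve_right (not_not.2 hv)
    rwa [Equiv.swap_apply_of_ne_of_ne hcγ hcβ]
  · exact ⟨hm.1, fun g hg hvg => hR.kempeSwap_apply_of_notMem hg hvg hv ▸ hm.2 g hg hvg⟩

theorem isKempeClosed_reachable (u : V) :
    G.IsKempeClosed D φ γ β {v | (G.kempeGraph D φ γ β).Reachable u v} := by
  intro g hg hc a hag ha w hwg
  rcases eq_or_ne a w with rfl | haw
  · exact ha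
  refine ha.trans (SimpleGraph.Adj.reachable ?_)
  rw [kempeGraph, SimpleGraph.fromEdgeSet_adj]
  exact ⟨⟨g, hg, hc, ((Sym2.mem_and_mem_iff haw).1 ⟨hag, hwg⟩)⟩, haw⟩

theorem IsProperOff.degree_kempeGraph_le [Fintype V] [DecidableRel (G.kempeGraph D φ γ β).Adj]
    (hφ : G.IsProperOff D k φ) {v : V} {C : Finset ℕ}
    (hC : ∀ g ∉ D, v ∈ G.ends g → (φ g = γ ∨ φ g = β) → φ g ∈ C) :
    (G.kempeGraph D φ γ β).degree v ≤ #C := by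
  rw [← SimpleGraph.card_neighborFinset_eq_degree]
  refine card_le_card_of_forall_subsingleton
    (fun w c => ∃ g ∉ D, φ g = c ∧ G.ends g = s(v, w)) (fun w hw => ?_) ?_
  · rw [SimpleGraph.mem_neighborFinset, kempeGraph, SimpleGraph.fromEdgeSet_adj] at hw
    obtain ⟨⟨g, hg, hc, hends⟩, -⟩ := hw
    exact ⟨φ g, hC g hg (hends ▸ Sym2.mem_mk_left _ _) hc, g, hg, rfl, hends⟩
  · rintro c - w₁ ⟨-, g₁, hg₁, hc₁, he₁⟩ w₂ ⟨-, g₂, hg₂, hc₂, he₂⟩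
    obtain rfl : g₁ = g₂ := hφ.eq_of_mem_ends hg₁ hg₂ (he₁ ▸ Sym2.mem_mk_left _ _)
      (he₂ ▸ Sym2.mem_mk_left _ _) (hc₁.trans hc₂.symm)
    exact Sym2.congr_right.1 (he₁.symm.trans he₂)

theorem IsProperOff.not_reachable_kempeGraph [Fintype V] [DecidableEq V]
    (hφ : G.IsProperOff D k φ) {a b c : V} (hab : a ≠ b) (hac : a ≠ c) (hbc : b ≠ c)
    (hend : ∀ v ∈ ({a, b, c} : Finset V), G.MissingAt D φ k v γ ∨ G.MissingAt D φ k v β) :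
    ¬ ((G.kempeGraph D φ γ β).Reachable a b ∧ (G.kempeGraph D φ γ β).Reachable a c) := by
  classical
  rintro ⟨hrb, hrc⟩
  set H := G.kempeGraph D φ γ β
  set C := H.connectedComponentMk a
  have hdeg2 (v : V) : H.degree v ≤ 2 :=
    (hφ.degree_kempeGraph_le (γ := γ) (β := β) (v := v) (C := {γ, β}) (by simp)).trans
      Finset.card_le_two
  have hleaf : {a, b, c} ⊆ ({v | v ∈ C.supp ∧ H.degree v ≤ 1} : Finset V) := by
    intro v hv
    refine mem_filter.2 ⟨mem_univ v, ?_, ?_⟩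
    · rcases mem_insert.1 hv with rfl | hv
      · rfl
      rcases mem_insert.1 hv with rfl | hv
      · exact (SimpleGraph.ConnectedComponent.sound hrb).symm
      rw [mem_singleton.1 hv]
      exact (SimpleGraph.ConnectedComponent.sound hrc).symm
    · rcases hend v hv with hm | hm
      · exact hφ.degree_kempeGraph_le (γ := γ) (β := β) (C := {β})
          fun g hg hvg hc => by simpa using hc.resolve_left (hm.2 g hg hvg)
      · exact hφ.degree_kempeGraph_le (γ := γ) (β := β) (C := {γ})
          fun g hg hvg hc => by simpa using hc.resolve_right (hm.2 g hg hvg)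
  have := (card_le_card hleaf).trans (C.card_degree_le_one_le_two hdeg2)
  rw [card_insert_of_notMem (by simp [hab, hac]), card_pair hbc] at this
  omega

end Kempe

section Fan

variable {z : V} {e : E} {p : ℕ} {f : Fin p → E} {x : Fin p → V}

theorem IsMultiFan.eq_of_val_eq_zero (hfan : G.IsMultiFan D φ k z e p f x)
    {i : Fin p} (hi : i.val = 0) : f i = e := by
  obtain rfl : i = ⟨0, hfan.pos⟩ := Fin.ext hi
  exact hfan.first

theorem IsMultiFan.center_mem_ends (hfan : G.IsMultiFan D φ k z e p f x) (i : Fin p) :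
    z ∈ G.ends (f i) := by
  rw [hfan.ends_eq i]
  exact Sym2.mem_mk_left _ _

theorem IsMultiFan.vertex_zero_mem_ends (hfan : G.IsMultiFan D φ k z e p f x) :
    x ⟨0, hfan.pos⟩ ∈ G.ends e := by
  have hends := hfan.ends_eq ⟨0, hfan.pos⟩
  rw [hfan.first] at hends
  exact hends ▸ Sym2.mem_mk_right _ _

theorem IsMultiFan.ne_center (hfan : G.IsMultiFan D φ k z e p f x) (i : Fin p) :
    x i ≠ z := fun h => G.loopless (f i) (by rw [hfan.ends_eq i, h]; exact Sym2.mk_isDiag_iff.2 rfl)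

/-- Shifting along the fan. Only the shape of the fan is taken from `hfan` (its colouring `ψ` is
arbitrary); its links are required of `φ`, and only up to `n`. -/
theorem IsMultiFan.edgeColorable_of_links {ψ φ : E → ℕ} (hfan : G.IsMultiFan {e} ψ k z e p f x)
    (hφ : G.IsProperOff {e} k φ) (n : Fin p)
    (hlinks : ∀ i : Fin p, i.val ≠ 0 → i ≤ n →
      ∃ j < i, G.MissingAt {e} φ k (x j) (φ (f i)))
    {γ : ℕ} (hz : G.MissingAt {e} φ k z γ) (hx : G.MissingAt {e} φ k (x n) γ) :
    G.EdgeColorable k := by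
  classical
  have hφ' := hφ.update (hfan.ends_eq n) hz hx
  by_cases hn : n.val = 0
  · rw [hfan.eq_of_val_eq_zero hn, erase_singleton] at hφ'
    exact ⟨_, hφ'⟩
  have hfn : f n ∉ ({e} : Finset E) := hfan.coloured n hn
  rw [erase_eq_of_notMem hfn] at hφ'
  have hγ : γ ≠ φ (f n) := (hz.2 _ hfn (hfan.center_mem_ends n)).symm
  obtain ⟨l, hl, hβl⟩ := hlinks n hn le_rfl
  refine hfan.edgeColorable_of_links hφ' l (fun i hi hil => ?_)
    (hφ.missingAt_update hfn (hfan.center_mem_ends n) hγ) (hβl.update hγ)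
  obtain ⟨j, hj, hm⟩ := hlinks i hi (hil.trans hl.le)
  refine ⟨j, hj, ?_⟩
  rw [Function.update_of_ne (hfan.inj.ne (hil.trans_lt hl).ne)]
  exact hm.update (hz.2 _ (hfan.coloured i hi) (hfan.center_mem_ends i)).symm
termination_by n
decreasing_by exact hl

theorem IsMultiFan.edgeColorable_of_missingAt_center (hfan : G.IsMultiFan {e} φ k z e p f x)
    (hφ : G.IsProperOff {e} k φ) (i : Fin p) {γ : ℕ} (hz : G.MissingAt {e} φ k z γ)
    (hx : G.MissingAt {e} φ k (x i) γ) : G.EdgeColorable k :=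
  hfan.edgeColorable_of_links hφ i (fun j hj _ => hfan.missing j hj) hz hx

/-- The Kempe swap at `x t` leaves the fan edges alone, since they meet `z`. It keeps every link
except possibly the one of the fan edge coloured `γ`; if that link breaks, its vertex `x j` now
misses `β` like `z` does. -/
theorem IsMultiFan.edgeColorable_of_not_reachable (hfan : G.IsMultiFan {e} φ k z e p f x)
    (hφ : G.IsProperOff {e} k φ) {γ β : ℕ} (hβz : G.MissingAt {e} φ k z β)
    (t : Fin p) (hγt : G.MissingAt {e} φ k (x t) γ)
    (ht : ¬ (G.kempeGraph {e} φ γ β).Reachable (x t) z) : G.EdgeColorable k := by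
  set R := {v | (G.kempeGraph {e} φ γ β).Reachable (x t) v}
  have hR : G.IsKempeClosed {e} φ γ β R := isKempeClosed_reachable (x t)
  have hφ' := hφ.kempeSwap hγt.1 hβz.1 hR
  have hβz' := hβz.kempeSwap hR (Or.inr ht)
  have hβ' : ∀ v ∈ R, G.MissingAt {e} φ k v γ → G.MissingAt {e} (G.kempeSwap φ γ β R) k v β :=
    fun v hv hm => MissingAt.kempeSwap_of_mem (by rwa [Equiv.swap_apply_right]) hβz.1 hv
  have hlink : ∀ i j : Fin p, i.val ≠ 0 → G.MissingAt {e} φ k (x j) (φ (f i)) →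
      (φ (f i) ≠ γ ∨ x j ∉ R) →
      G.MissingAt {e} (G.kempeSwap φ γ β R) k (x j) (G.kempeSwap φ γ β R (f i)) := by
    intro i j hi hm h
    have hβ : φ (f i) ≠ β := hβz.2 _ (hfan.coloured i hi) (hfan.center_mem_ends i)
    rw [hR.kempeSwap_apply_of_notMem (hfan.coloured i hi) (hfan.center_mem_ends i) ht]
    exact hm.kempeSwap hR (h.imp_left fun hγ => ⟨hγ, hβ⟩)
  by_cases hbreak : ∃ i j : Fin p, i.val ≠ 0 ∧ φ (f i) = γ ∧ j < i ∧
      G.MissingAt {e} φ k (x j) γ ∧ x j ∈ R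
  · obtain ⟨i, j, hi, hiγ, hji, hjγ, hjR⟩ := hbreak
    refine hfan.edgeColorable_of_links hφ' j (fun i' hi' hi'j => ?_) hβz' (hβ' _ hjR hjγ)
    obtain ⟨j', hj', hm⟩ := hfan.missing i' hi'
    refine ⟨j', hj', hlink i' j' hi' hm (Or.inl fun hγ => ?_)⟩
    have hii' : f i' = f i := hφ.eq_of_mem_ends (hfan.coloured i' hi') (hfan.coloured i hi)
      (hfan.center_mem_ends i') (hfan.center_mem_ends i) (hγ.trans hiγ.symm)
    exact (hi'j.trans_lt hji).ne (hfan.inj hii')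
  · push Not at hbreak
    refine hfan.edgeColorable_of_links hφ' t (fun i hi _ => ?_) hβz' (hβ' _ .rfl hγt)
    obtain ⟨j, hj, hm⟩ := hfan.missing i hi
    refine ⟨j, hj, hlink i j hi hm ?_⟩
    by_cases hγ : φ (f i) = γ
    · exact Or.inr (hbreak i j hi hγ hj (hγ ▸ hm))
    · exact Or.inl hγ

/-- If `γ` is missing at `z` we shift; otherwise, with `β` missing at `z`, the `(γ, β)`-Kempe
chain from `z` is a path, so it cannot reach both `x i` and `x j`. -/
theorem IsMultiFan.edgeColorable_of_missingAt_of_ne [Fintype V] [Finite E] {Δ : ℕ}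
    (hΔ : ∀ v, G.degree v ≤ Δ) (hΔk : Δ ≤ k) (hz : z ∈ G.ends e)
    (hfan : G.IsMultiFan {e} φ k z e p f x) (hφ : G.IsProperOff {e} k φ) {i j : Fin p}
    (hne : x i ≠ x j) {γ : ℕ} (hi : G.MissingAt {e} φ k (x i) γ)
    (hj : G.MissingAt {e} φ k (x j) γ) : G.EdgeColorable k := by
  classical
  by_cases hzγ : G.MissingAt {e} φ k z γ
  · exact hfan.edgeColorable_of_missingAt_center hφ i hzγ hi
  obtain ⟨β, hβ⟩ := exists_missingAt_of_mem_ends (φ := φ) hΔ hΔk (mem_singleton_self e) hz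
  by_cases hri : (G.kempeGraph {e} φ γ β).Reachable (x i) z
  · refine hfan.edgeColorable_of_not_reachable hφ hβ j hj fun hrj => ?_
    refine hφ.not_reachable_kempeGraph (hfan.ne_center i).symm (hfan.ne_center j).symm hne
      ?_ ⟨hri.symm, hrj.symm⟩
    simp only [mem_insert, mem_singleton, forall_eq_or_imp, forall_eq]
    exact ⟨Or.inr hβ, Or.inl hi, Or.inl hj⟩
  · exact hfan.edgeColorable_of_not_reachable hφ hβ i hi hri

theorem IsMaximalMultiFan.exists_colour_eq_of_missingAt
    (hF : G.IsMaximalMultiFan {e} φ k z e p f x) (hφ : G.IsProperOff {e} k φ)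
    (hno : ¬ G.EdgeColorable k) {j : Fin p} {c : ℕ} (hc : G.MissingAt {e} φ k (x j) c) :
    ∃ i : Fin p, i.val ≠ 0 ∧ φ (f i) = c := by
  obtain ⟨hfan, hmax⟩ := hF
  have hzc : ¬ G.MissingAt {e} φ k z c :=
    fun h => hno (hfan.edgeColorable_of_missingAt_center hφ j h hc)
  obtain ⟨g, hg, hzg, hgc⟩ : ∃ g ∉ ({e} : Finset E), z ∈ G.ends g ∧ φ g = c := by
    by_contra! h
    exact hzc ⟨hc.1, h⟩
  obtain ⟨i, rfl⟩ : g ∈ Set.range f := by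
    by_contra h
    exact hmax g hg h hzg ⟨j, hgc ▸ hc⟩
  exact ⟨i, fun hi => hg (by simp [hfan.eq_of_val_eq_zero hi]), hgc⟩

end Fan

end Multigraph

theorem vizing_fan_equation_general {V E : Type} [Fintype V] [Fintype E] [DecidableEq V]
    (G : Multigraph V E) (Δ k : ℕ)
    (hΔ : ∀ v, G.degree v ≤ Δ) (hΔk : Δ ≤ k)
    (z : V) (e : E) (hz : z ∈ G.ends e)
    (φ : E → ℕ) (hφ : G.IsProperOff {e} k φ)
    (hno : ¬ ∃ c : E → ℕ, G.IsProperOff ∅ k c)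
    (p : ℕ) (f : Fin p → E) (x : Fin p → V)
    (hF : G.IsMaximalMultiFan {e} φ k z e p f x) :
    2 ≤ p ∧
      ∑ v ∈ Finset.univ.image x, {c : ℕ | G.MissingAt {e} φ k v c}.ncard ≤ p := by
  have hfan := hF.1
  set M := G.missingColours {e} φ k
  have hdisj : (univ.image x : Set V).PairwiseDisjoint M := by
    rw [coe_image, coe_univ, Set.image_univ]
    rintro _ ⟨i, rfl⟩ _ ⟨j, rfl⟩ hne
    exact disjoint_left.2 fun c hci hcj => hno (hfan.edgeColorable_of_missingAt_of_ne hΔ hΔk hz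
      hφ hne (Multigraph.mem_missingColours.1 hci) (Multigraph.mem_missingColours.1 hcj))
  have hcolours : (univ.image x).biUnion M ⊆ (univ.erase ⟨0, hfan.pos⟩).image (φ ∘ f) := by
    intro c hc
    obtain ⟨_, hv, hcv⟩ := mem_biUnion.1 hc
    obtain ⟨j, -, rfl⟩ := mem_image.1 hv
    obtain ⟨i, hi, rfl⟩ :=
      hF.exists_colour_eq_of_missingAt hφ hno (Multigraph.mem_missingColours.1 hcv)
    exact mem_image_of_mem _ (mem_erase.2 ⟨fun h => hi (by simp [h]), mem_univ i⟩)
  obtain ⟨β, hβ⟩ := Multigraph.exists_missingAt_of_mem_ends (φ := φ) hΔ hΔk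
    (mem_singleton_self e) hfan.vertex_zero_mem_ends
  have hpos : 0 < #((univ.image x).biUnion M) := card_pos.2
    ⟨β, mem_biUnion.2 ⟨_, mem_image_of_mem x (mem_univ _), Multigraph.mem_missingColours.2 hβ⟩⟩
  have hle := (card_le_card hcolours).trans card_image_le
  rw [card_erase_of_mem (mem_univ _), card_univ, Fintype.card_fin] at hle
  rw [sum_congr rfl fun v _ => Multigraph.ncard_setOf_missingAt v, ← card_biUnion hdisj]
  omega

/-- A form of Vizing's fan equation: if the uncoloured edge `e` at `z` cannot
be coloured, i.e. `G` has no proper `k`-edge-colouring, then every maximal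
multi-fan at `z` with respect to `e` and `φ` has `p ≥ 2` and the total number
of colours missing at its vertices is at most the number of its edges. -/
theorem vizing_fan_equation {V E : Type} [Fintype V] [Fintype E] [DecidableEq V]
    [DecidableEq E] (G : Multigraph V E) (Δ k : ℕ)
    (hΔ : ∀ v, G.degree v ≤ Δ) (hΔk : Δ ≤ k)
    (z : V) (e : E) (hz : z ∈ G.ends e)
    (φ : E → ℕ) (hφ : G.IsProperOff {e} k φ)
    (hno : ¬ ∃ c : E → ℕ, G.IsProperOff ∅ k c)
    (p : ℕ) (f : Fin p → E) (x : Fin p → V)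
    (hF : G.IsMaximalMultiFan {e} φ k z e p f x) :
    2 ≤ p ∧
      ∑ v ∈ Finset.univ.image x, {c : ℕ | G.MissingAt {e} φ k v c}.ncard ≤ p :=
  vizing_fan_equation_general G Δ k hΔ hΔk z e hz φ hφ hno p f x hF
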